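/- Every execution of Algorithm 1 has length at most n, where n is the number of vertices of G; that is, any sequence of states s_0, s_1, …, s_T in which each consecutive state is obtained by a move of Algorithm 1 satisfies T ≤ n. -/

import Mathlib

variable {V : Type*} [Fintype V] [DecidableEq V]

/-- `i` is IN and every vertex of its closed neighborhood is dominated even without `i`. -/
def Removable (G : SimpleGraph V) (s : V → Bool) (i : V) : Prop :=
  s i = true ∧ ∀ j, (j = i ∨ G.Adj i j) →
    ((j ≠ i ∧ s j = true) ∨ ∃ k, G.Adj j k ∧ k ≠ i ∧ s k = true)

/-- `i` is OUT and all its neighbors are OUT. -/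
def Addable (G : SimpleGraph V) (s : V → Bool) (i : V) : Prop :=
  s i = false ∧ ∀ j, G.Adj i j → s j = false

def Unsatisfied (G : SimpleGraph V) (s : V → Bool) (i : V) : Prop :=
  Removable G s i ∨ Addable G s i

/-- `j ≠ i` is within two hops of `i`. -/
def Adj2 (G : SimpleGraph V) (i j : V) : Prop :=
  j ≠ i ∧ (G.Adj i j ∨ ∃ k, G.Adj i k ∧ G.Adj k j)

def Forbidden (G : SimpleGraph V) (id : V → ℕ) (s : V → Bool) (i : V) : Prop :=
  Unsatisfied G s i ∧ ∀ j, Adj2 G i j → (¬ Unsatisfied G s j ∨ id i > id j)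

/-- One step of Algorithm 1: a forbidden node flips its state, all others unchanged. -/
def Move (G : SimpleGraph V) (id : V → ℕ) (s s' : V → Bool) : Prop :=
  ∃ i, Forbidden G id s i ∧ s' i = !(s i) ∧ ∀ j, j ≠ i → s' j = s j

/-!
A vertex that has just flipped is settled: IN with no neighbour IN (after an addition) or OUT
with a neighbour IN (after a removal). Settled vertices are satisfied, and they stay settled
whichever unsatisfied vertex flips next. Hence every vertex moves at most once, and the movers of
an execution are pairwise distinct.
-/

section Settled

variable {W : Type*} {G : SimpleGraph W} {s : W → Bool} {i : W}

/-- Unlike `¬ Unsatisfied G s i`, this is preserved by every flip of an unsatisfied vertex. -/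
def Settled (G : SimpleGraph W) (s : W → Bool) (i : W) : Prop :=
  (s i = true ∧ ∀ j, G.Adj i j → s j = false) ∨ (s i = false ∧ ∃ k, G.Adj i k ∧ s k = true)

theorem Settled.not_unsatisfied (h : Settled G s i) : ¬ Unsatisfied G s i := by
  rintro (⟨hin, hdom⟩ | ⟨hout, hnbrs⟩)
  · rcases h with ⟨-, hnbrs⟩ | ⟨hout, -⟩
    · obtain ⟨k, hik, -, hk⟩ := (hdom i (Or.inl rfl)).resolve_left fun h ↦ h.1 rfl
      simp [hnbrs k hik] at hk
    · simp [hin] at hout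
  · rcases h with ⟨hin, -⟩ | ⟨-, k, hik, hk⟩
    · simp [hin] at hout
    · simp [hnbrs k hik] at hk

theorem Unsatisfied.settled_update [DecidableEq W] (h : Unsatisfied G s i) :
    Settled G (Function.update s i (!s i)) i := by
  rcases h with ⟨hin, hdom⟩ | ⟨hout, hnbrs⟩
  · obtain ⟨k, hik, hki, hk⟩ := (hdom i (Or.inl rfl)).resolve_left fun h ↦ h.1 rfl
    exact Or.inr ⟨by simp [hin], k, hik, by simp [hki, hk]⟩
  · exact Or.inl ⟨by simp [hout], fun j hij ↦ by simp [hij.ne', hnbrs j hij]⟩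

/-- If the flipped vertex is the IN neighbour `k` witnessing that `i` is settled, then `k` was
removable, so `i` has another IN neighbour. -/
theorem Settled.update_of_unsatisfied [DecidableEq W] {j : W} (h : Settled G s i)
    (hj : Unsatisfied G s j) : Settled G (Function.update s j (!s j)) i := by
  have hji : j ≠ i := by rintro rfl; exact h.not_unsatisfied hj
  rcases h with ⟨hin, hnbrs⟩ | ⟨hout, k, hik, hk⟩
  · have hij : ¬ G.Adj i j := by
      intro hij
      rcases hj with ⟨hjin, -⟩ | ⟨-, hjnbrs⟩
      · simp [hnbrs j hij] at hjin
      · simp [hjnbrs i hij.symm] at hin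
    refine Or.inl ⟨by simp [hji.symm, hin], fun l hil ↦ ?_⟩
    have hlj : l ≠ j := by rintro rfl; exact hij hil
    simp [hlj, hnbrs l hil]
  · by_cases hkj : k = j
    · subst hkj
      have hrem : Removable G s k := hj.resolve_right fun h ↦ by simp [h.1] at hk
      obtain ⟨m, him, hmk, hm⟩ :=
        (hrem.2 i (Or.inr hik.symm)).resolve_left fun h ↦ by simp [h.2] at hout
      exact Or.inr ⟨by simp [hji.symm, hout], m, him, by simp [hmk, hm]⟩
    · exact Or.inr ⟨by simp [hji.symm, hout], k, hik, by simp [hkj, hk]⟩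

theorem Move.exists_unsatisfied_eq_update [DecidableEq W] {id : W → ℕ} {s' : W → Bool}
    (h : Move G id s s') : ∃ i, Unsatisfied G s i ∧ s' = Function.update s i (!s i) := by
  obtain ⟨i, hi, hflip, hrest⟩ := h
  refine ⟨i, hi.1, funext fun j ↦ ?_⟩
  by_cases hji : j = i
  · subst hji; simp [hflip]
  · simp [hji, hrest j hji]

theorem injective_of_unsatisfied_flips [DecidableEq W] {T : ℕ}
    {seq : ℕ → W → Bool} {mover : Fin T → W}
    (hstep : ∀ t : Fin T, Unsatisfied G (seq t) (mover t) ∧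
      seq (t + 1) = Function.update (seq t) (mover t) (!seq t (mover t))) :
    Function.Injective mover := by
  have hsettled : ∀ t : Fin T, ∀ u, (t : ℕ) + 1 ≤ u → u ≤ T → Settled G (seq u) (mover t) := by
    intro t u htu
    induction u, htu using Nat.le_induction with
    | base => intro; rw [(hstep t).2]; exact (hstep t).1.settled_update
    | succ u _ ih =>
      intro huT
      have hu := hstep ⟨u, huT⟩
      rw [hu.2]
      exact (ih (Nat.le_of_succ_le huT)).update_of_unsatisfied hu.1
  exact Function.Injective.of_lt_imp_ne fun a b hab heq ↦
    (hsettled a b hab b.2.le).not_unsatisfied (heq ▸ (hstep b).1)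

end Settled

theorem execution_length_le_card_general
    (G : SimpleGraph V) (id : V → ℕ)
    (T : ℕ) (seq : ℕ → V → Bool)
    (hexec : ∀ t, t < T → Move G id (seq t) (seq (t + 1))) :
    T ≤ Fintype.card V := by
  choose mover hmover using fun t : Fin T ↦ (hexec t t.2).exists_unsatisfied_eq_update
  simpa using Fintype.card_le_of_injective mover (injective_of_unsatisfied_flips hmover)

/-- Every execution of Algorithm 1 has length at most `n = |V|`. -/
theorem execution_length_le_card
    (G : SimpleGraph V) (id : V → ℕ) (hid : Function.Injective id)
    (T : ℕ) (seq : ℕ → V → Bool)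
    (hexec : ∀ t, t < T → Move G id (seq t) (seq (t + 1))) :
    T ≤ Fintype.card V :=
  execution_length_le_card_general G id T seq hexec
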